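/- Let f(x) = ∑_{n≥1} f_n x^n be a formal power series with zero constant term, k ≥ 1 an integer, and write f(x)^k = ∑_{n≥k} g_n(k) x^n. Then g_k(k) = f_1^k, and for n ≥ k+1: (n−k) f_1 g_n(k) = ∑_{α=1}^{n−k} [(α+1)(k+1) − (n+1)] f_{α+1} g_{n−α}(k). -/

import Mathlib

/-!
Write `g = f ^ k`. Differentiating gives `f * g' = k * f' * g`, and multiplying by `X` turns this
into `∑_{a+b=m} (b - k a) f_a g_b = 0` for every `m`. Take `m = n + 1`: the term `a = 0` vanishes
because `f_0 = 0`, the terms with `a > n + 1 - k` vanish because `g_b = 0` for `b < k`, and the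
term `a = 1` is `(n - k) f_1 g_n`, which gives the recursion.
-/

open PowerSeries Finset

namespace PowerSeries

variable {R : Type*} [CommRing R]

theorem coeff_X_mul_derivative (g : R⟦X⟧) (n : ℕ) :
    coeff n (X * d⁄dX R g) = n * coeff n g := by
  cases n with
  | zero => simp
  | succ n => rw [coeff_succ_X_mul, coeff_derivative, mul_comm, Nat.cast_succ]

theorem mul_derivative_pow (f : R⟦X⟧) (k : ℕ) :
    f * d⁄dX R (f ^ k) = k • (f ^ k * d⁄dX R f) := by
  induction k with
  | zero => simp
  | succ k ih =>
    rw [pow_succ, Derivation.leibniz, mul_add, smul_eq_mul, smul_eq_mul, mul_left_comm, ih]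
    simp only [nsmul_eq_mul, Nat.cast_succ]
    ring

theorem sum_antidiagonal_coeff_mul_coeff_pow (f : R⟦X⟧) (k n : ℕ) :
    ∑ p ∈ antidiagonal n, ((p.2 : ℤ) - k * p.1) • (coeff p.1 f * coeff p.2 (f ^ k)) = 0 := by
  have h : f * (X * d⁄dX R (f ^ k)) = k • ((X * d⁄dX R f) * f ^ k) := by
    linear_combination X * mul_derivative_pow f k
  have h := congrArg (coeff n) h
  rw [map_nsmul, coeff_mul, coeff_mul, ← sub_eq_zero, smul_sum, ← sum_sub_distrib] at h
  rw [← h]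
  refine sum_congr rfl fun p _ => ?_
  simp only [coeff_X_mul_derivative, sub_smul, mul_smul, natCast_zsmul, nsmul_eq_mul]
  ring

theorem sum_range_coeff_mul_coeff_pow (f : R⟦X⟧) (k n : ℕ) :
    ∑ a ∈ range (n + 1), ((n : ℤ) - (k + 1) * a) • (coeff a f * coeff (n - a) (f ^ k)) = 0 := by
  rw [← sum_antidiagonal_coeff_mul_coeff_pow f k n, Nat.sum_antidiagonal_eq_sum_range_succ_mk]
  refine sum_congr rfl fun a ha => ?_
  rw [Nat.cast_sub (Nat.lt_succ_iff.1 (mem_range.1 ha))]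
  ring_nf

theorem coeff_pow_eq_zero_of_lt {f : R⟦X⟧} (hf : constantCoeff f = 0) {j k : ℕ} (hj : j < k) :
    coeff j (f ^ k) = 0 :=
  coeff_of_lt_order j ((Nat.cast_lt.2 hj).trans_le (le_order_pow_of_constantCoeff_eq_zero k hf))

theorem sum_range_coeff_mul_coeff_pow_of_constantCoeff_eq_zero {f : R⟦X⟧}
    (hf : constantCoeff f = 0) {k m : ℕ} (hkm : k ≤ m) :
    ∑ a ∈ range (m - k + 1), ((m : ℤ) - (k + 1) * a) • (coeff a f * coeff (m - a) (f ^ k)) = 0 := by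
  rw [← sum_range_coeff_mul_coeff_pow f k m]
  refine sum_subset (range_subset_range.2 (by omega)) fun a ha ha' => ?_
  rw [mem_range] at ha ha'
  rw [coeff_pow_eq_zero_of_lt hf (by omega), mul_zero, smul_zero]

theorem coeff_pow_self {f : R⟦X⟧} (hf : constantCoeff f = 0) (k : ℕ) :
    coeff k (f ^ k) = coeff 1 f ^ k := by
  obtain ⟨g, rfl⟩ := X_dvd_iff.2 hf
  simp [mul_pow, coeff_X_pow_mul']

end PowerSeries

theorem powerSeries_pow_coeff_rec_of_constantCoeff_zero_general {R : Type*} [CommRing R]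
    (f : PowerSeries R) (hf : PowerSeries.constantCoeff f = 0) (k : ℕ) :
    PowerSeries.coeff k (f ^ k) = (PowerSeries.coeff 1 f) ^ k ∧
      ∀ n, k + 1 ≤ n →
        (n - k : ℕ) • (PowerSeries.coeff 1 f * PowerSeries.coeff n (f ^ k)) =
          ∑ α ∈ Finset.Icc 1 (n - k),
            (((α : ℤ) + 1) * ((k : ℤ) + 1) - ((n : ℤ) + 1)) •
              (PowerSeries.coeff (α + 1) f * PowerSeries.coeff (n - α) (f ^ k)) := by
  refine ⟨coeff_pow_self hf k, fun n hn => ?_⟩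
  let T : ℕ → R := fun a =>
    ((n + 1 : ℕ) - (k + 1) * a : ℤ) • (coeff a f * coeff (n + 1 - a) (f ^ k))
  have hsum : ∑ a ∈ range (n - k + 2), T a = 0 :=
    (show n + 1 - k + 1 = n - k + 2 by omega) ▸
      sum_range_coeff_mul_coeff_pow_of_constantCoeff_eq_zero hf (by omega : k ≤ n + 1)
  have hT0 : T 0 = 0 := by simp [T, hf]
  have hT1 : T 1 = ((n - k : ℕ) : ℤ) • (coeff 1 f * coeff n (f ^ k)) := by
    simp only [T, Nat.cast_sub (by omega : k ≤ n)]
    congr 1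
    push_cast
    ring
  have hshift : ∑ α ∈ Icc 1 (n - k),
      (((α : ℤ) + 1) * ((k : ℤ) + 1) - ((n : ℤ) + 1)) • (coeff (α + 1) f * coeff (n - α) (f ^ k))
        = -∑ i ∈ range (n - k), T (i + 1 + 1) := by
    rw [← Ico_add_one_right_eq_Icc, sum_Ico_eq_sum_range, Nat.add_sub_cancel, ← sum_neg_distrib]
    refine sum_congr rfl fun i _ => ?_
    simp only [T, ← neg_smul, add_comm 1 i, show n + 1 - (i + 1 + 1) = n - (i + 1) by omega]
    congr 1
    push_cast
    ring
  rw [sum_range_succ', sum_range_succ', hT0, add_zero, zero_add, hT1] at hsum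
  rw [← natCast_zsmul, hshift]
  exact eq_neg_of_add_eq_zero_right hsum

theorem powerSeries_pow_coeff_rec_of_constantCoeff_zero {R : Type*} [CommRing R]
    (f : PowerSeries R) (hf : PowerSeries.constantCoeff f = 0) (k : ℕ) (hk : 1 ≤ k) :
    PowerSeries.coeff k (f ^ k) = (PowerSeries.coeff 1 f) ^ k ∧
      ∀ n, k + 1 ≤ n →
        (n - k : ℕ) • (PowerSeries.coeff 1 f * PowerSeries.coeff n (f ^ k)) =
          ∑ α ∈ Finset.Icc 1 (n - k),
            (((α : ℤ) + 1) * ((k : ℤ) + 1) - ((n : ℤ) + 1)) •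
              (PowerSeries.coeff (α + 1) f * PowerSeries.coeff (n - α) (f ^ k)) :=
  powerSeries_pow_coeff_rec_of_constantCoeff_zero_general f hf k
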